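/- arXiv:alg-geom/9411013 — 2 statements merged into one kernel-verified Lean document; each statement's English description precedes it below -/
import Mathlib

section
/- (Proposition 3.1) Let Â and B̂ be color classes of an undirected graph G = (V,E) (associated to implication classes A and B). Then Â = B̂ if and only if Ã = B̃. -/
open Set

namespace TransOrient

variable {V : Type*}

/-- `E` is the edge set of an undirected graph on the vertex type `V`:
an irreflexive and symmetric relation, given as a set of ordered pairs. -/
def IsGraph (E : Set (V × V)) : Prop :=
  (∀ a : V, (a, a) ∉ E) ∧ (∀ a b : V, (a, b) ∈ E ↔ (b, a) ∈ E)

/-- The forcing relation `Γ` on directed edges: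
`(a,b) Γ (a',b')` iff (`a = a'` and `(b,b') ∉ E`) or (`b = b'` and `(a,a') ∉ E`). -/
def Gamma (E : Set (V × V)) (e e' : V × V) : Prop :=
  e ∈ E ∧ e' ∈ E ∧
    ((e.1 = e'.1 ∧ (e.2, e'.2) ∉ E) ∨ (e.2 = e'.2 ∧ (e.1, e'.1) ∉ E))

/-- The implication classes of `G = (V,E)`: equivalence classes on `E` of
the reflexive-transitive closure of `Γ`. -/
def IsImplicationClass (E : Set (V × V)) (A : Set (V × V)) : Prop :=
  ∃ e ∈ E, A = {e' | Relation.ReflTransGen (Gamma E) e e'}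

/-- `A⁻¹ = {(b,a) : (a,b) ∈ A}`. -/
def inv (A : Set (V × V)) : Set (V × V) := {p | (p.2, p.1) ∈ A}

/-- The color class `Â = A ∪ A⁻¹` of an implication class `A`. -/
def hat (A : Set (V × V)) : Set (V × V) := A ∪ inv A

/-- `Ã`: the set of vertices incident to an edge of `A`. -/
def tilde (A : Set (V × V)) : Set V := {v | ∃ w, (v, w) ∈ A ∨ (w, v) ∈ A}

/-- A transitive orientation `E'` of a symmetric edge set `F`:
`E' ⊆ F`, `E' ∩ E'⁻¹ = ∅`, `E' ∪ E'⁻¹ = F` and `E'` is transitive. -/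
def IsTransOrientation (F E' : Set (V × V)) : Prop :=
  E' ⊆ F ∧ E' ∩ inv E' = ∅ ∧ E' ∪ inv E' = F ∧
    ∀ a b c : V, (a, b) ∈ E' → (b, c) ∈ E' → (a, c) ∈ E'

/-- `G` is a comparability graph if `E` admits a transitive orientation. -/
def IsComparability (E : Set (V × V)) : Prop :=
  ∃ E' : Set (V × V), IsTransOrientation E E'

/-- `E(X)`: the set of edges of `E` with both endpoints in `X`. -/
def edgesOn (E : Set (V × V)) (X : Set V) : Set (V × V) :=
  {p ∈ E | p.1 ∈ X ∧ p.2 ∈ X}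

/-- `X` is a partitive set of `G = (V,E)`. -/
def IsPartitive (E : Set (V × V)) (X : Set V) : Prop :=
  ∀ a ∈ X, ∀ b ∈ X, ∀ c ∉ X, ((a, c) ∈ E ↔ (b, c) ∈ E)

/-- `X` is a "strong" partitive set of `G = (V,E)`. -/
def IsStrongPartitive (E : Set (V × V)) (X : Set V) : Prop :=
  IsPartitive E X ∧
    ∀ Y : Set V, IsPartitive E Y → (Y ∩ X).Nonempty → X ⊆ Y ∨ Y ⊆ X

/-- `X` is a maximal "strong" partitive set of `G = (V,E)`: a strong partitive
set different from `V` which is maximal, for inclusion, among the strong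
partitive sets different from `V`. -/
def IsMaxStrongPartitive (E : Set (V × V)) (X : Set V) : Prop :=
  IsStrongPartitive E X ∧ X ≠ Set.univ ∧
    ∀ Y : Set V, IsStrongPartitive E Y → Y ≠ Set.univ → X ⊆ Y → X = Y

/-- `X` is a partitive set of the induced subgraph `G(W) = (W, E(W))`. -/
def IsPartitiveIn (E : Set (V × V)) (W : Set V) (X : Set V) : Prop :=
  X ⊆ W ∧ ∀ a ∈ X, ∀ b ∈ X, ∀ c ∈ W \ X,
    ((a, c) ∈ edgesOn E W ↔ (b, c) ∈ edgesOn E W)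

/-- `X` is a "strong" partitive set of the induced subgraph `G(W)`. -/
def IsStrongPartitiveIn (E : Set (V × V)) (W : Set V) (X : Set V) : Prop :=
  IsPartitiveIn E W X ∧
    ∀ Y : Set V, IsPartitiveIn E W Y → (Y ∩ X).Nonempty → X ⊆ Y ∨ Y ⊆ X

/-- `X` is a maximal "strong" partitive set of the induced subgraph `G(W)`. -/
def IsMaxStrongPartitiveIn (E : Set (V × V)) (W : Set V) (X : Set V) : Prop :=
  IsStrongPartitiveIn E W X ∧ X ≠ W ∧
    ∀ Y : Set V, IsStrongPartitiveIn E W Y → Y ≠ W → X ⊆ Y → X = Y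

/-- Two directed edges lie in the same color class of `G = (V,E)`. -/
def SameColor (E : Set (V × V)) (e e' : V × V) : Prop :=
  ∃ A : Set (V × V), IsImplicationClass E A ∧ e ∈ hat A ∧ e' ∈ hat A

/-- A simplex of `G = (V,E)` given by its (finite, nonempty) vertex set `VS`:
a complete induced subgraph whose edges, for distinct unordered pairs,
lie in distinct color classes of `G`. -/
def IsSimplex (E : Set (V × V)) (VS : Set V) : Prop :=
  VS.Finite ∧ VS.Nonempty ∧
    (∀ a ∈ VS, ∀ b ∈ VS, a ≠ b → (a, b) ∈ E) ∧
    (∀ a ∈ VS, ∀ b ∈ VS, ∀ c ∈ VS, ∀ d ∈ VS, a ≠ b → c ≠ d →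
      SameColor E (a, b) (c, d) → (a = c ∧ b = d) ∨ (a = d ∧ b = c))

/-- The rank of a simplex on `r+1` vertices is `r`. -/
noncomputable def simplexRank (VS : Set V) : ℕ := VS.ncard - 1

/-- A maximal simplex: its vertex set is not properly contained in the
vertex set of another simplex. -/
def IsMaxSimplex (E : Set (V × V)) (VS : Set V) : Prop :=
  IsSimplex E VS ∧ ∀ VS' : Set V, IsSimplex E VS' → VS ⊆ VS' → VS = VS'

/-- The multiplex `M(S)` generated by a simplex with vertex set `VS`:
the union of all color classes of `G` containing an edge of the simplex. -/
def multiplex (E : Set (V × V)) (VS : Set V) : Set (V × V) :=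
  {e | ∃ A : Set (V × V), IsImplicationClass E A ∧ e ∈ hat A ∧
    ∃ a ∈ VS, ∃ b ∈ VS, a ≠ b ∧ (a, b) ∈ hat A}

/-- A maximal multiplex of `G`: a multiplex generated by a maximal simplex. -/
def IsMaxMultiplex (E : Set (V × V)) (M : Set (V × V)) : Prop :=
  ∃ VS : Set V, IsMaxSimplex E VS ∧ M = multiplex E VS

/-- `P` is a partition of the set `W`. -/
def IsPartitionOf (W : Set V) (P : Set (Set V)) : Prop :=
  (∀ X ∈ P, X.Nonempty) ∧ ⋃₀ P = W ∧
    ∀ X ∈ P, ∀ Y ∈ P, X ≠ Y → X ∩ Y = ∅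

/-- Adjacency in the quotient of the induced subgraph `G(W)` by a partition:
two distinct blocks are adjacent iff some pair of representatives is an
edge of `E(W)`. -/
def quotAdj (E : Set (V × V)) (W : Set V) (X Y : Set V) : Prop :=
  X ≠ Y ∧ ∃ x ∈ X, ∃ y ∈ Y, (x, y) ∈ edgesOn E W

/-- A partitive set of an abstract graph with vertex set `W` and adjacency
relation `Adj`. -/
def IsPartitiveGen {α : Type*} (W : Set α) (Adj : α → α → Prop) (X : Set α) : Prop :=
  X ⊆ W ∧ ∀ a ∈ X, ∀ b ∈ X, ∀ c ∈ W \ X, (Adj a c ↔ Adj b c)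

/-- An abstract graph `(W, Adj)` is indecomposable if all its partitive
sets are trivial. -/
def IndecomposableGen {α : Type*} (W : Set α) (Adj : α → α → Prop) : Prop :=
  ∀ X : Set α, IsPartitiveGen W Adj X → X.Subsingleton ∨ X = W

/-- An isomorphism between the graphs `(Vα, Aα)` and `(Vβ, Aβ)`:
a bijection of the vertex sets preserving adjacency in both directions. -/
def GraphIso {α β : Type*} (Vα : Set α) (Aα : α → α → Prop)
    (Vβ : Set β) (Aβ : β → β → Prop) : Prop :=
  ∃ f : α → β, Set.BijOn f Vα Vβ ∧
    ∀ a ∈ Vα, ∀ b ∈ Vα, (Aα a b ↔ Aβ (f a) (f b))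

/-- `(V', E')` is a subgraph of the induced subgraph `G(W)` of `G = (V,E)`. -/
def IsSubgraphOf (E : Set (V × V)) (W : Set V) (V' : Set V) (E' : Set (V × V)) : Prop :=
  V' ⊆ W ∧ E' ⊆ edgesOn E W ∧ (∀ e ∈ E', e.1 ∈ V' ∧ e.2 ∈ V') ∧
    (∀ a b : V, (a, b) ∈ E' ↔ (b, a) ∈ E')

end TransOrient

/-!
Two distinct color classes are disjoint. If `Â ≠ B̂` but `Ã = B̃`, take `(b,c) ∈ A`; since
`c ∈ B̃` there is `(a,c) ∈ B̂`, and `(a,b) ∈ E`, for otherwise `(c,b) Γ (c,a)` would put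
`(c,a)` in `Â`. Now one of the triangles `abc` has an apex outside the color class of its
opposite side: `a` for the side `bc` when `(a,b) ∉ Â`, and `b` for the side `ac` when
`(a,b) ∈ Â`. By the triangle lemma, the apex of such a triangle is adjacent to both endpoints
of every edge of that class, so by irreflexivity it is not one of its endpoints, although
`Ã = B̃` says it is.
-/

namespace TransOrient

open Relation

variable {V : Type*} {E : Set (V × V)} {A B : Set (V × V)}

theorem Gamma.symm (hG : IsGraph E) {e f : V × V} (h : Gamma E e f) : Gamma E f e := by
  obtain ⟨he, hf, ⟨h1, h2⟩ | ⟨h1, h2⟩⟩ := h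
  · exact ⟨hf, he, Or.inl ⟨h1.symm, fun h => h2 ((hG.2 _ _).1 h)⟩⟩
  · exact ⟨hf, he, Or.inr ⟨h1.symm, fun h => h2 ((hG.2 _ _).1 h)⟩⟩

theorem Gamma.swap (hG : IsGraph E) {e f : V × V} (h : Gamma E e f) :
    Gamma E e.swap f.swap := by
  obtain ⟨he, hf, h⟩ := h
  exact ⟨(hG.2 _ _).1 he, (hG.2 _ _).1 hf, h.symm⟩

theorem reflTransGen_gamma_symm (hG : IsGraph E) {e f : V × V}
    (h : ReflTransGen (Gamma E) e f) : ReflTransGen (Gamma E) f e :=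
  have : Std.Symm (Gamma E) := ⟨fun _ _ => Gamma.symm hG⟩
  Std.Symm.symm _ _ h

theorem reflTransGen_gamma_swap (hG : IsGraph E) {e f : V × V}
    (h : ReflTransGen (Gamma E) e f) : ReflTransGen (Gamma E) e.swap f.swap :=
  h.lift Prod.swap fun _ _ => Gamma.swap hG

theorem mem_of_reflTransGen_gamma {e f : V × V} (he : e ∈ E)
    (h : ReflTransGen (Gamma E) e f) : f ∈ E := by
  rcases h.cases_tail with rfl | ⟨_, _, hf⟩
  exacts [he, hf.2.1]

theorem mem_hat_swap {p : V × V} : p.swap ∈ hat A ↔ p ∈ hat A := Or.comm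

theorem hat_inv : hat (inv A) = hat A := union_comm _ _

theorem mem_tilde_iff {v : V} : v ∈ tilde A ↔ ∃ w, (v, w) ∈ hat A := Iff.rfl

theorem tilde_eq_tilde_of_hat_eq (h : hat A = hat B) : tilde A = tilde B := by
  ext v
  simp only [mem_tilde_iff, h]

namespace IsImplicationClass

theorem nonempty (hA : IsImplicationClass E A) : A.Nonempty := by
  obtain ⟨e, -, rfl⟩ := hA
  exact ⟨e, ReflTransGen.refl⟩

theorem subset (hA : IsImplicationClass E A) : A ⊆ E := by
  obtain ⟨e, he, rfl⟩ := hA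
  exact fun _ => mem_of_reflTransGen_gamma he

theorem eq_setOf_of_mem (hG : IsGraph E) (hA : IsImplicationClass E A) {f : V × V}
    (hf : f ∈ A) : A = {g | ReflTransGen (Gamma E) f g} := by
  obtain ⟨e, -, rfl⟩ := hA
  ext g
  exact ⟨(reflTransGen_gamma_symm hG hf).trans, hf.trans⟩

theorem inv (hG : IsGraph E) (hA : IsImplicationClass E A) :
    IsImplicationClass E (TransOrient.inv A) := by
  obtain ⟨e, he, rfl⟩ := hA
  refine ⟨e.swap, (hG.2 _ _).1 he, ?_⟩
  ext f
  exact ⟨reflTransGen_gamma_swap hG, reflTransGen_gamma_swap hG⟩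

theorem hat_subset (hG : IsGraph E) (hA : IsImplicationClass E A) : hat A ⊆ E := by
  rintro ⟨x, y⟩ (h | h)
  exacts [hA.subset h, (hG.2 _ _).1 (hA.subset h)]

theorem mem_of_reflTransGen (hG : IsGraph E) (hA : IsImplicationClass E A) {f g : V × V}
    (hf : f ∈ A) (h : ReflTransGen (Gamma E) f g) : g ∈ A := by
  rw [hA.eq_setOf_of_mem hG hf]
  exact h

theorem mem_hat_of_reflTransGen (hG : IsGraph E) (hA : IsImplicationClass E A)
    {f g : V × V} (hf : f ∈ hat A) (h : ReflTransGen (Gamma E) f g) : g ∈ hat A :=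
  hf.imp (fun hf => hA.mem_of_reflTransGen hG hf h)
    (fun hf => (hA.inv hG).mem_of_reflTransGen hG hf h)

theorem mem_diff_hat_of_reflTransGen (hG : IsGraph E) (hA : IsImplicationClass E A)
    {f g : V × V} (hf : f ∈ E \ hat A) (h : ReflTransGen (Gamma E) f g) : g ∈ E \ hat A :=
  ⟨mem_of_reflTransGen_gamma hf.1 h,
    fun hg => hf.2 (hA.mem_hat_of_reflTransGen hG hg (reflTransGen_gamma_symm hG h))⟩

theorem eq_of_mem_of_mem (hG : IsGraph E) (hA : IsImplicationClass E A)
    (hB : IsImplicationClass E B) {f : V × V} (hfA : f ∈ A) (hfB : f ∈ B) : A = B := by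
  rw [hA.eq_setOf_of_mem hG hfA, hB.eq_setOf_of_mem hG hfB]

theorem hat_eq_of_mem (hG : IsGraph E) (hA : IsImplicationClass E A)
    (hB : IsImplicationClass E B) {f : V × V} (hfA : f ∈ hat A) (hfB : f ∈ hat B) :
    hat A = hat B := by
  rcases hfA with hfA | hfA <;> rcases hfB with hfB | hfB
  · rw [hA.eq_of_mem_of_mem hG hB hfA hfB]
  · rw [hA.eq_of_mem_of_mem hG (hB.inv hG) hfA hfB, hat_inv]
  · rw [← (hA.inv hG).eq_of_mem_of_mem hG hB hfA hfB, hat_inv]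
  · rw [← hat_inv (A := A), (hA.inv hG).eq_of_mem_of_mem hG (hB.inv hG) hfA hfB, hat_inv]

/-- If `a` is joined to `x` and `y` by edges outside `Â`, a forcing step `(x,y) Γ (x,z)` inside
`Â` is mirrored by the forcing step `(a,y) Γ (a,z)`. -/
theorem gamma_apex (hG : IsGraph E) (hA : IsImplicationClass E A) {a x y z : V}
    (hxz : (x, z) ∈ hat A) (hyz : (y, z) ∉ E) (hax : (a, x) ∈ E \ hat A)
    (hay : (a, y) ∈ E) :
    Gamma E (a, y) (a, z) := by
  refine ⟨hay, ?_, Or.inl ⟨rfl, hyz⟩⟩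
  by_contra haz
  have hstep : Gamma E (x, z) (x, a) :=
    ⟨hA.hat_subset hG hxz, (hG.2 _ _).1 hax.1, Or.inl ⟨rfl, fun h => haz ((hG.2 _ _).1 h)⟩⟩
  exact hax.2 (mem_hat_swap.1 (hA.mem_hat_of_reflTransGen hG hxz (.single hstep)))

theorem reflTransGen_apex (hG : IsGraph E) (hA : IsImplicationClass E A) {a b c : V}
    (hbc : (b, c) ∈ A) (hab : (a, b) ∈ E \ hat A) (hac : (a, c) ∈ E \ hat A)
    {e : V × V} (he : e ∈ A) :
    ReflTransGen (Gamma E) (a, b) (a, e.1) ∧ ReflTransGen (Gamma E) (a, c) (a, e.2) := by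
  rw [hA.eq_setOf_of_mem hG hbc] at he
  induction he with
  | refl => exact ⟨.refl, .refl⟩
  | @tail y z hy hyz ih =>
    have hzA : z ∈ A := hA.mem_of_reflTransGen hG hbc (hy.tail hyz)
    have hay1 := hA.mem_diff_hat_of_reflTransGen hG hab ih.1
    have hay2 := hA.mem_diff_hat_of_reflTransGen hG hac ih.2
    obtain ⟨y1, y2⟩ := y
    obtain ⟨z1, z2⟩ := z
    obtain ⟨-, -, ⟨rfl, hy2z2⟩ | ⟨rfl, hy1z1⟩⟩ := hyz
    · exact ⟨ih.1, ih.2.tail (hA.gamma_apex hG (Or.inl hzA) hy2z2 hay1 hay2.1)⟩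
    · exact ⟨ih.1.tail (hA.gamma_apex hG (Or.inr hzA) hy1z1 hay2 hay1.1), ih.2⟩

theorem notMem_tilde_of_apex (hG : IsGraph E) (hA : IsImplicationClass E A) {a b c : V}
    (hbc : (b, c) ∈ hat A) (hab : (a, b) ∈ E \ hat A) (hac : (a, c) ∈ E \ hat A) :
    a ∉ tilde A := by
  wlog hbcA : (b, c) ∈ A generalizing b c
  · exact this (mem_hat_swap.2 hbc) hac hab (hbc.resolve_left hbcA)
  rintro ⟨w, haw | hwa⟩
  · exact hG.1 a <|
      mem_of_reflTransGen_gamma hab.1 (hA.reflTransGen_apex hG hbcA hab hac haw).1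
  · exact hG.1 a <|
      mem_of_reflTransGen_gamma hac.1 (hA.reflTransGen_apex hG hbcA hab hac hwa).2

theorem hat_eq_of_tilde_eq (hG : IsGraph E) (hA : IsImplicationClass E A)
    (hB : IsImplicationClass E B) (h : tilde A = tilde B) : hat A = hat B := by
  by_contra hne
  have hdisj : ∀ f ∈ hat A, f ∉ hat B :=
    fun f hfA hfB => hne (hA.hat_eq_of_mem hG hB hfA hfB)
  obtain ⟨⟨b, c⟩, hbc⟩ := hA.nonempty
  obtain ⟨a, hca⟩ : c ∈ tilde B := h ▸ ⟨b, Or.inr hbc⟩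
  have hac : (a, c) ∈ hat B := mem_hat_swap.2 hca
  have hcb : (c, b) ∈ hat A := Or.inr hbc
  have hab : (a, b) ∈ E := by
    by_contra hab
    have hstep : Gamma E (c, b) (c, a) :=
      ⟨hA.hat_subset hG hcb, hB.hat_subset hG hca,
        Or.inl ⟨rfl, fun h => hab ((hG.2 _ _).1 h)⟩⟩
    exact hdisj _ (hA.mem_hat_of_reflTransGen hG hcb (.single hstep)) hca
  by_cases habA : (a, b) ∈ hat A
  · have hba : (b, a) ∈ E \ hat B :=
      ⟨(hG.2 _ _).1 hab, fun h => hdisj _ habA (mem_hat_swap.1 h)⟩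
    have hbc' : (b, c) ∈ E \ hat B := ⟨hA.subset hbc, hdisj _ (Or.inl hbc)⟩
    exact hB.notMem_tilde_of_apex hG hac hba hbc' (h ▸ ⟨c, Or.inl hbc⟩)
  · have hac' : (a, c) ∈ E \ hat A := ⟨hB.hat_subset hG hac, fun h => hdisj _ h hac⟩
    exact hA.notMem_tilde_of_apex hG (Or.inl hbc) ⟨hab, habA⟩ hac' (h ▸ ⟨c, hac⟩)

end IsImplicationClass

end TransOrient

open TransOrient in
/-- **(Proposition 3.1)** For color classes `Â` and `B̂` of `G`:
`Â = B̂ ↔ Ã = B̃`. -/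
theorem hat_eq_iff_tilde_eq
    {V : Type*} (E : Set (V × V)) (hG : IsGraph E)
    (A B : Set (V × V)) (hA : IsImplicationClass E A) (hB : IsImplicationClass E B) :
    hat A = hat B ↔ tilde A = tilde B :=
  ⟨tilde_eq_tilde_of_hat_eq, hA.hat_eq_of_tilde_eq hG hB⟩
end

section
/- (Corollary 3.6) Let X be a strong partitive set of an undirected graph G = (V,E) with X ≠ V, and let u ∈ V∖X. Then either (u,x) ∉ E for every x ∈ X, or there exists a color class Â of G such that (u,x) ∈ Â for every x ∈ X. -/
/-!
If `u ∉ X` sees a vertex of `X`, it sees all of them since `X` is partitive. Suppose two such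
edges `ux`, `ux'` had different colors. They are not related by `Γ`, so `xx'` is an edge.
By Gallai, the vertex set `Ã` of the class `A` of `ux` is partitive; it meets `X` and contains
`u ∉ X`, so strongness gives `X ⊆ Ã`, in particular `x' ∈ Ã`. But the color of `x'x` stays
inside `X` and so differs from that of `ux`, and Golumbic's Triangle Lemma for the triangle
`x'ux` then keeps `x'` out of `Ã`.
-/

open Set

namespace TransOrient

variable {V : Type*} {E : Set (V × V)}

def implicationClass (E : Set (V × V)) (e : V × V) : Set (V × V) :=
  {e' | Relation.ReflTransGen (Gamma E) e e'}

lemma mem_implicationClass_self (e : V × V) : e ∈ implicationClass E e :=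
  Relation.ReflTransGen.refl

lemma implicationClass_subset {e : V × V} (he : e ∈ E) : implicationClass E e ⊆ E := by
  intro e' h
  induction h with
  | refl => exact he
  | tail _ hstep _ => exact hstep.2.1

lemma gamma_symm (hG : IsGraph E) : Std.Symm (Gamma E) := by
  refine ⟨?_⟩
  rintro e e' ⟨he, he', ⟨h₁, h₂⟩ | ⟨h₁, h₂⟩⟩
  · exact ⟨he', he, Or.inl ⟨h₁.symm, fun h => h₂ ((hG.2 _ _).mp h)⟩⟩
  · exact ⟨he', he, Or.inr ⟨h₁.symm, fun h => h₂ ((hG.2 _ _).mp h)⟩⟩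

lemma gamma_swap (hG : IsGraph E) {e e' : V × V} (h : Gamma E e e') :
    Gamma E e.swap e'.swap := by
  obtain ⟨he, he', h | h⟩ := h
  · exact ⟨(hG.2 _ _).mp he, (hG.2 _ _).mp he', Or.inr h⟩
  · exact ⟨(hG.2 _ _).mp he, (hG.2 _ _).mp he', Or.inl h⟩

lemma implicationClass_eq_of_mem (hG : IsGraph E) {e e' : V × V}
    (h : e' ∈ implicationClass E e) : implicationClass E e' = implicationClass E e := by
  have := gamma_symm hG
  ext f
  exact ⟨fun hf => h.trans hf, fun hf => (symm h).trans hf⟩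

lemma swap_mem_implicationClass_swap (hG : IsGraph E) {e e' : V × V}
    (h : e' ∈ implicationClass E e) : e'.swap ∈ implicationClass E e.swap :=
  Relation.ReflTransGen.lift Prod.swap (fun _ _ => gamma_swap hG) _ _ h

lemma inv_implicationClass (hG : IsGraph E) (e : V × V) :
    inv (implicationClass E e) = implicationClass E e.swap := by
  ext f
  exact ⟨swap_mem_implicationClass_swap hG (e' := f.swap),
    swap_mem_implicationClass_swap hG (e := e.swap)⟩

lemma hat_implicationClass_eq_of_mem (hG : IsGraph E) {e e' : V × V}
    (h : e' ∈ hat (implicationClass E e)) :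
    hat (implicationClass E e') = hat (implicationClass E e) := by
  simp only [hat, inv_implicationClass hG]
  rcases h with h | h
  · rw [implicationClass_eq_of_mem hG h,
      implicationClass_eq_of_mem hG (swap_mem_implicationClass_swap hG h)]
  · have h' : e'.swap ∈ implicationClass E e := h
    rw [← implicationClass_eq_of_mem hG h', ← Prod.swap_swap e',
      implicationClass_eq_of_mem hG (swap_mem_implicationClass_swap hG h'), Prod.swap_swap,
      Set.union_comm]

lemma implicationClass_subset_prod_of_isPartitive (hG : IsGraph E) {X : Set V}
    (hX : IsPartitive E X) {e : V × V} (he : e ∈ X ×ˢ X) :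
    implicationClass E e ⊆ X ×ˢ X := by
  intro e' h
  induction h with
  | refl => exact he
  | @tail f f' _ hstep ih =>
    obtain ⟨-, hf', ⟨h₁, h₂⟩ | ⟨h₁, h₂⟩⟩ := hstep
    · refine ⟨h₁ ▸ ih.1, by_contra fun hX' => h₂ ?_⟩
      exact (hX f.1 ih.1 f.2 ih.2 f'.2 hX').mp (h₁ ▸ hf')
    · refine ⟨by_contra fun hX' => h₂ ?_, h₁ ▸ ih.2⟩
      exact (hX f.2 ih.2 f.1 ih.1 f'.1 hX').mp (h₁ ▸ (hG.2 _ _).mp hf')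

section Gallai

variable {e₀ : V × V} {c : V}

/-- A vertex adjacent to exactly one endpoint of an edge of `A` is forced into `Ã`. -/
lemma fst_adj_iff_snd_adj_of_notMem_tilde (hG : IsGraph E) (h₀ : e₀ ∈ E) {e : V × V}
    (he : e ∈ implicationClass E e₀) (hc : c ∉ tilde (implicationClass E e₀)) :
    (e.1, c) ∈ E ↔ (e.2, c) ∈ E := by
  have heE : e ∈ E := implicationClass_subset h₀ he
  constructor
  · intro h₁
    by_contra h₂
    exact hc ⟨e.1, Or.inr (he.tail ⟨heE, h₁, Or.inl ⟨rfl, h₂⟩⟩)⟩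
  · intro h₁
    by_contra h₂
    exact hc ⟨e.2, Or.inl (he.tail ⟨heE, (hG.2 _ _).mp h₁, Or.inr ⟨rfl, h₂⟩⟩)⟩

lemma fst_adj_iff_of_notMem_tilde (hG : IsGraph E) (h₀ : e₀ ∈ E) {e : V × V}
    (he : e ∈ implicationClass E e₀) (hc : c ∉ tilde (implicationClass E e₀)) :
    (e.1, c) ∈ E ↔ (e₀.1, c) ∈ E := by
  induction he with
  | refl => exact Iff.rfl
  | @tail f f' hf hstep ih =>
    obtain ⟨hfE, hf'E, ⟨h₁, -⟩ | ⟨h₁, h₂⟩⟩ := hstep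
    · rw [← h₁]; exact ih
    · have hf' : f' ∈ implicationClass E e₀ := hf.tail ⟨hfE, hf'E, Or.inr ⟨h₁, h₂⟩⟩
      calc (f'.1, c) ∈ E ↔ (f'.2, c) ∈ E := fst_adj_iff_snd_adj_of_notMem_tilde hG h₀ hf' hc
        _ ↔ (f.2, c) ∈ E := by rw [h₁]
        _ ↔ (f.1, c) ∈ E := (fst_adj_iff_snd_adj_of_notMem_tilde hG h₀ hf hc).symm
        _ ↔ (e₀.1, c) ∈ E := ih

/-- Gallai. -/
lemma isPartitive_tilde_implicationClass (hG : IsGraph E) (h₀ : e₀ ∈ E) :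
    IsPartitive E (tilde (implicationClass E e₀)) := by
  have key : ∀ p ∈ tilde (implicationClass E e₀), ∀ c ∉ tilde (implicationClass E e₀),
      (p, c) ∈ E ↔ (e₀.1, c) ∈ E := by
    rintro p ⟨w, hw | hw⟩ c hc
    · exact fst_adj_iff_of_notMem_tilde hG h₀ hw hc
    · exact (fst_adj_iff_snd_adj_of_notMem_tilde hG h₀ hw hc).symm.trans
        (fst_adj_iff_of_notMem_tilde hG h₀ hw hc)
  intro a ha b hb c hc
  rw [key a ha c hc, key b hb c hc]

end Gallai

section Triangle

variable {a b c : V}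

lemma triangle_step (hG : IsGraph E) (hab : (a, b) ∈ E) (hac : (a, c) ∈ E)
    (hAB : hat (implicationClass E (b, c)) ≠ hat (implicationClass E (a, b)))
    {q : V × V} {r : V} (hq : q ∈ implicationClass E (b, c)) (hqE : q ∈ E)
    (hq₁ : (a, q.1) ∈ implicationClass E (a, b)) (hr : (a, r) ∈ implicationClass E (a, c))
    (hrq : (r, q.2) ∉ E) :
    (a, q.2) ∈ implicationClass E (a, c) := by
  by_cases haq : (a, q.2) ∈ E
  · exact hr.tail ⟨implicationClass_subset hac hr, haq, Or.inl ⟨rfl, hrq⟩⟩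
  · -- otherwise `q Γ (q.1, a)`, which puts `(q.1, a)` in both color classes
    have hqa : (q.1, a) ∈ E := (hG.2 _ _).mp (implicationClass_subset hab hq₁)
    have h₁ : (q.1, a) ∈ hat (implicationClass E (b, c)) :=
      Or.inl (hq.tail ⟨hqE, hqa, Or.inl ⟨rfl, fun h => haq ((hG.2 _ _).mp h)⟩⟩)
    have h₂ : (q.1, a) ∈ hat (implicationClass E (a, b)) := Or.inr hq₁
    exact absurd ((hat_implicationClass_eq_of_mem hG h₁).symm.trans
      (hat_implicationClass_eq_of_mem hG h₂)) hAB

/-- Golumbic's Triangle Lemma. -/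
lemma triangle_lemma (hG : IsGraph E) (hab : (a, b) ∈ E) (hac : (a, c) ∈ E)
    (hAB : hat (implicationClass E (b, c)) ≠ hat (implicationClass E (a, b)))
    (hAC : hat (implicationClass E (b, c)) ≠ hat (implicationClass E (a, c)))
    {e : V × V} (he : e ∈ implicationClass E (b, c)) :
    (a, e.1) ∈ implicationClass E (a, b) ∧ (a, e.2) ∈ implicationClass E (a, c) := by
  have hAC' : hat (implicationClass E (c, b)) ≠ hat (implicationClass E (a, c)) := by
    rwa [hat_implicationClass_eq_of_mem hG (e := (b, c)) (Or.inr (mem_implicationClass_self _))]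
  induction he with
  | refl => exact ⟨mem_implicationClass_self _, mem_implicationClass_self _⟩
  | @tail f f' hf hstep ih =>
    have hf' : f' ∈ implicationClass E (b, c) := hf.tail hstep
    obtain ⟨-, hf'E, ⟨h₁, h₂⟩ | ⟨h₁, h₂⟩⟩ := hstep
    · exact ⟨h₁ ▸ ih.1, triangle_step hG hab hac hAB hf' hf'E (h₁ ▸ ih.1) ih.2 h₂⟩
    · -- the mirror case: the same step for the triangle with `b` and `c` exchanged
      exact ⟨triangle_step hG hac hab hAC' (swap_mem_implicationClass_swap hG hf')
        ((hG.2 _ _).mp hf'E) (show (a, f'.2) ∈ _ from h₁ ▸ ih.2) ih.1 h₂, h₁ ▸ ih.2⟩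

lemma notMem_tilde_of_triangle (hG : IsGraph E) (hab : (a, b) ∈ E) (hac : (a, c) ∈ E)
    (hAB : hat (implicationClass E (b, c)) ≠ hat (implicationClass E (a, b)))
    (hAC : hat (implicationClass E (b, c)) ≠ hat (implicationClass E (a, c))) :
    a ∉ tilde (implicationClass E (b, c)) := by
  rintro ⟨w, hw | hw⟩
  · exact hG.1 a (implicationClass_subset hab (triangle_lemma hG hab hac hAB hAC hw).1)
  · exact hG.1 a (implicationClass_subset hac (triangle_lemma hG hab hac hAB hAC hw).2)

end Triangle

lemma hat_implicationClass_eq_of_isStrongPartitive (hG : IsGraph E) {X : Set V}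
    (hX : IsStrongPartitive E X) {u x x' : V} (hu : u ∉ X) (hx : x ∈ X) (hx' : x' ∈ X)
    (hux : (u, x) ∈ E) (hux' : (u, x') ∈ E) :
    hat (implicationClass E (u, x')) = hat (implicationClass E (u, x)) := by
  by_contra hne
  have hxx' : (x, x') ∈ E := by
    by_contra h
    have : (u, x') ∈ implicationClass E (u, x) :=
      Relation.ReflTransGen.single ⟨hux, hux', Or.inl ⟨rfl, h⟩⟩
    exact hne (hat_implicationClass_eq_of_mem hG (Or.inl this))
  -- `Ã` is partitive and meets `X` without being inside it, so it contains `X`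
  have hx'A : x' ∈ tilde (implicationClass E (u, x)) := by
    rcases hX.2 _ (isPartitive_tilde_implicationClass hG hux)
        ⟨x, ⟨u, Or.inr (mem_implicationClass_self _)⟩, hx⟩ with h | h
    · exact h hx'
    · exact absurd (h ⟨x, Or.inl (mem_implicationClass_self _)⟩) hu
  have hAB : hat (implicationClass E (u, x)) ≠ hat (implicationClass E (x', u)) := by
    rwa [hat_implicationClass_eq_of_mem hG (e := (u, x')) (e' := (x', u))
      (Or.inr (mem_implicationClass_self _)), ne_comm]
  have hAC : hat (implicationClass E (u, x)) ≠ hat (implicationClass E (x', x)) := by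
    intro h
    have hsub := implicationClass_subset_prod_of_isPartitive hG hX.1 (e := (x', x)) ⟨hx', hx⟩
    have hmem : (u, x) ∈ hat (implicationClass E (x', x)) :=
      h ▸ Or.inl (mem_implicationClass_self _)
    rcases hmem with h | h
    · exact hu (hsub h).1
    · exact hu (hsub h).2
  exact notMem_tilde_of_triangle hG ((hG.2 _ _).mp hux') ((hG.2 _ _).mp hxx') hAB hAC hx'A

end TransOrient

open TransOrient in
theorem external_vertex_one_color_to_strong_partitive_general
    {V : Type*} (E : Set (V × V)) (hG : IsGraph E)
    (X : Set V) (hX : IsStrongPartitive E X)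
    (u : V) (hu : u ∉ X) :
    (∀ x ∈ X, (u, x) ∉ E) ∨
      ∃ A : Set (V × V), IsImplicationClass E A ∧ ∀ x ∈ X, (u, x) ∈ hat A := by
  by_cases h : ∃ x ∈ X, (u, x) ∈ E
  · obtain ⟨x₀, hx₀, hux₀⟩ := h
    right
    refine ⟨implicationClass E (u, x₀), ⟨(u, x₀), hux₀, rfl⟩, fun x hx => ?_⟩
    have hux : (u, x) ∈ E :=
      (hG.2 _ _).mp ((hX.1 x₀ hx₀ x hx u hu).mp ((hG.2 _ _).mp hux₀))
    rw [← hat_implicationClass_eq_of_isStrongPartitive hG hX hu hx₀ hx hux₀ hux]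
    exact Or.inl (mem_implicationClass_self _)
  · exact Or.inl fun x hx hux => h ⟨x, hx, hux⟩

open TransOrient in
/-- **(Corollary 3.6)** If `X` is a strong partitive set with `X ≠ V` and
`u ∈ V ∖ X`, then either `u` is adjacent to no vertex of `X`, or there is a
color class `Â` so that `(u,x) ∈ Â` for every `x ∈ X`. -/
theorem external_vertex_one_color_to_strong_partitive
    {V : Type*} (E : Set (V × V)) (hG : IsGraph E)
    (X : Set V) (hX : IsStrongPartitive E X) (hXV : X ≠ Set.univ)
    (u : V) (hu : u ∉ X) :
    (∀ x ∈ X, (u, x) ∉ E) ∨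
      ∃ A : Set (V × V), IsImplicationClass E A ∧ ∀ x ∈ X, (u, x) ∈ hat A :=
  external_vertex_one_color_to_strong_partitive_general E hG X hX u hu
end
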